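/- arXiv:2212.11252 — 4 statements merged into one kernel-verified Lean document; each statement's English description precedes it below -/
import Mathlib

section
/- Let X be a smooth complex curve, Δ ⊂ X × X the diagonal, U its complement, and N a locally free O_X-module of finite rank r. If P ⊆ j_*j*(N ⊠ N) is an O_{X×X}-submodule with P|_U = (N ⊠ N)|_U and P is not contained in N ⊠ N(kΔ) for any k > 0, then the 'chiral annihilator' P^⊥ ⊆ j_*j*(N^∨_{ω^{-1}} ⊠ N^∨_{ω^{-1}}) fails to restrict to the full sheaf on U; i.e. (N, P) is not dualizable. Equivalently: if (N, P) is dualizable then P ⊆ N ⊠ N(kΔ) for some positive integer k. -/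
open MvPolynomial

noncomputable section ChiralLocalModel

/-- The coordinate ring `ℂ[z₁, z₂]` of the local model `X² = 𝔸²`. -/
abbrev A2 : Type := MvPolynomial (Fin 2) ℂ

/-- The equation `z₁ - z₂` of the diagonal. -/
def dlt : A2 := X 0 - X 1

/-- The ring `ℂ[z₁, z₂][(z₁-z₂)⁻¹]` of functions on the complement `U` of the diagonal. -/
abbrev R2 : Type := Localization.Away dlt

/-- The inverse `(z₁ - z₂)⁻¹`. -/
def dltInv : R2 := IsLocalization.Away.invSelf dlt

variable {ι : Type} [Fintype ι] [DecidableEq ι]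

/-- The pairing with a fixed element `p` of the free module `ι → R2`, as an
`A2`-linear map `t ↦ Σ_q t q * p q`. -/
def pairMap (p : ι → R2) : (ι → R2) →ₗ[A2] R2 where
  toFun t := ∑ q, t q * p q
  map_add' t t' := by simp [add_mul, Finset.sum_add_distrib]
  map_smul' a t := by
    simp only [smul_mul_assoc, RingHom.id_apply, Pi.smul_apply]
    exact (Finset.smul_sum (r := a) (f := fun q => t q * p q) (s := Finset.univ)).symm

/-- The "chiral annihilator" of an `ℂ[z₁,z₂]`-submodule `P` of the free
`R2`-module `ι → R2`: all `t` whose pairing with every element of `P` is regular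
along the diagonal, i.e. lies in the image of `ℂ[z₁,z₂]`. -/
def chiralAnn (P : Submodule A2 (ι → R2)) : Submodule A2 (ι → R2) :=
  ⨅ p ∈ P, Submodule.comap (pairMap p) (LinearMap.range (Algebra.linearMap A2 R2))

end ChiralLocalModel


/-- Clearing denominators: if `x` lies in the `R2`-span of a set `S`, then some
power of `dlt` times `x` lies in the `A2`-span of `S`. -/
lemma span_clear_denominator {M : Type*} [AddCommGroup M] [Module R2 M] [Module A2 M]
    [IsScalarTower A2 R2 M] (S : Set M) {x : M} (hx : x ∈ Submodule.span R2 S) :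
    ∃ n : ℕ, (dlt ^ n) • x ∈ Submodule.span A2 S := by
  refine Submodule.span_induction (fun s hs => ⟨0, by simpa using Submodule.subset_span hs⟩)
    ⟨0, by simp⟩ ?_ ?_ hx
  · rintro x y _ _ ⟨nx, hnx⟩ ⟨ny, hny⟩
    refine ⟨nx + ny, ?_⟩
    rw [smul_add]
    apply Submodule.add_mem
    · rw [pow_add, mul_comm, mul_smul]
      exact Submodule.smul_mem _ _ hnx
    · rw [pow_add, mul_smul]
      exact Submodule.smul_mem _ _ hny
  · rintro c x _ ⟨nx, hnx⟩
    obtain ⟨⟨a, s⟩, hs⟩ := IsLocalization.surj (Submonoid.powers dlt) c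
    obtain ⟨ms, hms⟩ := s.2
    refine ⟨ms + nx, ?_⟩
    have key : (dlt ^ (ms + nx)) • (c • x) = a • ((dlt ^ nx) • x) := by
      rw [← algebraMap_smul R2 (dlt ^ (ms + nx)), ← algebraMap_smul R2 (dlt ^ nx),
        ← algebraMap_smul R2 a, smul_smul, smul_smul]
      congr 1
      have hms' : dlt ^ ms = (s : A2) := hms
      have hcs : c * algebraMap A2 R2 (s : A2) = algebraMap A2 R2 a := hs
      calc (algebraMap A2 R2) (dlt ^ (ms + nx)) * c
          = (c * algebraMap A2 R2 (dlt ^ ms)) * algebraMap A2 R2 (dlt ^ nx) := by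
            rw [pow_add, map_mul]; ring
        _ = algebraMap A2 R2 a * algebraMap A2 R2 (dlt ^ nx) := by rw [hms', hcs]
    rw [key]
    exact Submodule.smul_mem _ _ hnx

set_option synthInstance.maxHeartbeats 1000000 in
set_option maxHeartbeats 1000000 in
/-- (Local model on `X = 𝔸¹`, with `N` trivialized of rank `r`:
`j_*j*(N ⊠ N)` is the free module of rank `r²` over `ℂ[z₁,z₂][(z₁-z₂)⁻¹]`.)
If `P` is an `ℂ[z₁,z₂]`-submodule with `P|_U = (N ⊠ N)|_U` (it spans everything after
inverting `z₁ - z₂`) and the datum is dualizable (the chiral annihilator `P^⊥` also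
spans everything over `U`), then `P ⊆ N ⊠ N(kΔ)` for some positive integer `k`:
all elements of `P` have pole order at most `k` along the diagonal. -/
theorem dualizable_implies_bounded_poles (r : ℕ)
    (P : Submodule A2 ((Fin r × Fin r) → R2))
    (hfull : Submodule.span R2 (P : Set ((Fin r × Fin r) → R2)) = ⊤)
    (hdual : Submodule.span R2 ((chiralAnn P : Set ((Fin r × Fin r) → R2))) = ⊤) :
    ∃ k : ℕ, 0 < k ∧ ∀ m ∈ P, ∀ q : Fin r × Fin r,
      (algebraMap A2 R2 dlt) ^ k * m q ∈ (algebraMap A2 R2).range := by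
  classical
  have hq : ∀ q : Fin r × Fin r, ∃ n : ℕ,
      (dlt ^ n) • ((Pi.single q (1 : R2)) : (Fin r × Fin r) → R2) ∈
        Submodule.span A2 (chiralAnn P : Set ((Fin r × Fin r) → R2)) := by
    intro q
    apply span_clear_denominator
    rw [hdual]; trivial
  choose n hn using hq
  refine ⟨1 + ∑ q, n q, by positivity, ?_⟩
  intro m hm q
  set k := 1 + ∑ q, n q with hkdef
  have hle : n q ≤ ∑ q, n q :=
    Finset.single_le_sum (fun _ _ => Nat.zero_le _) (Finset.mem_univ q)
  have hksplit : k = (k - n q) + n q := by omega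
  have hk : (dlt ^ k) • ((Pi.single q (1 : R2)) : (Fin r × Fin r) → R2) ∈
      Submodule.span A2 (chiralAnn P : Set ((Fin r × Fin r) → R2)) := by
    rw [hksplit, pow_add, mul_smul]
    exact Submodule.smul_mem _ _ (hn q)
  have hcomap : Submodule.span A2 (chiralAnn P : Set ((Fin r × Fin r) → R2)) ≤
      Submodule.comap (pairMap m) (LinearMap.range (Algebra.linearMap A2 R2)) := by
    rw [Submodule.span_le]
    intro t ht
    have ht' : t ∈ chiralAnn P := ht
    simp only [chiralAnn, Submodule.mem_iInf] at ht'
    exact ht' m hm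
  have hkm := hcomap hk
  rw [Submodule.mem_comap, map_smul] at hkm
  have hval : pairMap m ((Pi.single q (1 : R2)) : (Fin r × Fin r) → R2) = m q := by
    have hdef : pairMap m ((Pi.single q (1 : R2)) : (Fin r × Fin r) → R2)
        = ∑ q', ((Pi.single q (1 : R2)) : (Fin r × Fin r) → R2) q' * m q' := rfl
    rw [hdef, Finset.sum_eq_single q]
    · simp
    · intro b _ hb
      rw [Pi.single_eq_of_ne hb, zero_mul]
    · intro h; exact absurd (Finset.mem_univ q) h
  rw [hval] at hkm
  have hsmul : (dlt ^ k) • m q = (algebraMap A2 R2 dlt) ^ k * m q := by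
    rw [← algebraMap_smul R2 (dlt ^ k) (m q), map_pow, smul_eq_mul]
  rw [hsmul] at hkm
  obtain ⟨a, ha⟩ := hkm
  exact ⟨a, ha⟩
end

section
/- In the ring of Laurent polynomials ℂ[z₁, z₂, (z₁−z₂)^{-1}], consider the free module M of rank 16 with basis φ_i ⊠ φ_j (1 ≤ i,j ≤ 4) over ℂ[z₁,z₂,(z₁−z₂)^{-1}], and the ℂ[z₁,z₂]-submodule P spanned by: φ_i ⊠ φ_j for {i,j} ≠ {1,2}; φ₁ ⊠ φ₂ − (z₁−z₂)^{-1} φ₃ ⊠ φ₄; and φ₂ ⊠ φ₁ + (z₁−z₂)^{-1} φ₄ ⊠ φ₃. Define the dual module with basis ψ_i ⊠ ψ_j and pairing ⟨φ_i ⊠ φ_j, ψ_k ⊠ ψ_l⟩ = δ_{ik}δ_{jl}. Then the annihilator P^⊥ = {t : ⟨p, t⟩ ∈ ℂ[z₁,z₂] for all p ∈ P} is the ℂ[z₁,z₂]-submodule spanned by: ψ_i ⊠ ψ_j for {i,j} ≠ {3,4}; ψ₃ ⊠ ψ₄ + (z₁−z₂)^{-1} ψ₁ ⊠ ψ₂;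 and ψ₄ ⊠ ψ₃ − (z₁−z₂)^{-1} ψ₂ ⊠ ψ₁. -/
open MvPolynomial

noncomputable section

/-- The standard basis `φ_i ⊠ φ_j` of the free module of rank 16. -/
def e8 (p : Fin 4 × Fin 4) : (Fin 4 × Fin 4) → R2 := Pi.single p 1

/-- The generators of `P`: `φ_i ⊠ φ_j` for `{i,j} ≠ {1,2}`,
`φ₁ ⊠ φ₂ − (z₁−z₂)⁻¹ φ₃ ⊠ φ₄` and `φ₂ ⊠ φ₁ + (z₁−z₂)⁻¹ φ₄ ⊠ φ₃`
(indices written `0,…,3` for `1,…,4`). -/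
def Pgen : Set ((Fin 4 × Fin 4) → R2) :=
  {m | (∃ i j : Fin 4, ¬((i = 0 ∧ j = 1) ∨ (i = 1 ∧ j = 0)) ∧ m = e8 (i, j)) ∨
    m = e8 (0, 1) - dltInv • e8 (2, 3) ∨
    m = e8 (1, 0) + dltInv • e8 (3, 2)}

/-- The claimed generators of `P^⊥`: `ψ_i ⊠ ψ_j` for `{i,j} ≠ {3,4}`,
`ψ₃ ⊠ ψ₄ + (z₁−z₂)⁻¹ ψ₁ ⊠ ψ₂` and `ψ₄ ⊠ ψ₃ − (z₁−z₂)⁻¹ ψ₂ ⊠ ψ₁`. -/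
def Qgen : Set ((Fin 4 × Fin 4) → R2) :=
  {m | (∃ i j : Fin 4, ¬((i = 2 ∧ j = 3) ∨ (i = 3 ∧ j = 2)) ∧ m = e8 (i, j)) ∨
    m = e8 (2, 3) + dltInv • e8 (0, 1) ∨
    m = e8 (3, 2) - dltInv • e8 (1, 0)}

end

section Helpers

noncomputable abbrev Rng : Submodule A2 R2 := LinearMap.range (Algebra.linearMap A2 R2)

lemma mem_rng (a : A2) : algebraMap A2 R2 a ∈ Rng := ⟨a, rfl⟩

lemma pairMap_apply {ι : Type} [Fintype ι] [DecidableEq ι] (p t : ι → R2) :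
    pairMap p t = ∑ q, t q * p q := rfl

lemma chiralAnn_mem {ι : Type} [Fintype ι] [DecidableEq ι]
    (P : Submodule A2 (ι → R2)) (t : ι → R2) :
    t ∈ chiralAnn P ↔ ∀ p ∈ P, pairMap p t ∈ Rng := by
  simp [chiralAnn, Submodule.mem_iInf, Submodule.mem_comap]

lemma chiralAnn_span {ι : Type} [Fintype ι] [DecidableEq ι]
    (S : Set (ι → R2)) (t : ι → R2) :
    t ∈ chiralAnn (Submodule.span A2 S) ↔ ∀ p ∈ S, pairMap p t ∈ Rng := by
  rw [chiralAnn_mem]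
  constructor
  · exact fun h p hp => h p (Submodule.subset_span hp)
  · intro h p hp
    induction hp using Submodule.span_induction with
    | mem p hp => exact h p hp
    | zero => simp [pairMap_apply]
    | add p p' _ _ hp hp' =>
        have : pairMap (p + p') t = pairMap p t + pairMap p' t := by
          simp [pairMap_apply, mul_add, Finset.sum_add_distrib]
        rw [this]; exact add_mem hp hp'
    | smul a p _ hp =>
        have : pairMap (a • p) t = a • pairMap p t := by
          simp only [pairMap_apply, Pi.smul_apply, mul_smul_comm]
          exact (Finset.smul_sum (r := a) (f := fun q => t q * p q) (s := Finset.univ)).symm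
        rw [this]; exact Submodule.smul_mem _ a hp

lemma pair_e8 (t : (Fin 4 × Fin 4) → R2) (a : Fin 4 × Fin 4) :
    pairMap (e8 a) t = t a := by
  simp [pairMap_apply, e8, Pi.single_apply]

lemma pair_add_smul (t : (Fin 4 × Fin 4) → R2) (a b : Fin 4 × Fin 4) (c : R2) :
    pairMap (e8 a + c • e8 b) t = t a + c * t b := by
  simp [pairMap_apply, e8, Pi.single_apply, mul_add, Finset.sum_add_distrib,
    mul_ite, mul_comm, mul_left_comm]

lemma pair_sub_smul (t : (Fin 4 × Fin 4) → R2) (a b : Fin 4 × Fin 4) (c : R2) :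
    pairMap (e8 a - c • e8 b) t = t a - c * t b := by
  simp [pairMap_apply, e8, Pi.single_apply, mul_sub, Finset.sum_sub_distrib,
    mul_ite, mul_comm, mul_left_comm]

end Helpers

section Main

lemma e8_apply (a b : Fin 4 × Fin 4) : e8 a b = if b = a then 1 else 0 :=
  Pi.single_apply a 1 b

lemma ite_mem_rng (c : Prop) [Decidable c] : (if c then (1:R2) else 0) ∈ Rng := by
  split
  · exact ⟨1, by simp⟩
  · exact ⟨0, by simp⟩

lemma forward : Submodule.span A2 Qgen ≤ chiralAnn (Submodule.span A2 Pgen) := by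
  rw [Submodule.span_le]
  rintro t ht
  rw [SetLike.mem_coe, chiralAnn_span]
  rintro p (⟨i, j, hij, rfl⟩ | rfl | rfl)
  · rw [pair_e8]
    rcases ht with ⟨k, l, hkl, rfl⟩ | rfl | rfl
    · rw [e8_apply]; exact ite_mem_rng _
    · have h1 : ((i,j) : Fin 4 × Fin 4) ≠ (0,1) := by
        simp only [ne_eq, Prod.mk.injEq, not_and]
        intro h0 h1; exact hij (Or.inl ⟨h0, h1⟩)
      simp only [Pi.add_apply, Pi.smul_apply, e8_apply, if_neg h1, smul_eq_mul, mul_zero, add_zero]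
      exact ite_mem_rng _
    · have h1 : ((i,j) : Fin 4 × Fin 4) ≠ (1,0) := by
        simp only [ne_eq, Prod.mk.injEq, not_and]
        intro h0 h1; exact hij (Or.inr ⟨h0, h1⟩)
      simp only [Pi.sub_apply, Pi.smul_apply, e8_apply, if_neg h1, smul_eq_mul, mul_zero, sub_zero]
      exact ite_mem_rng _
  · rw [pair_sub_smul]
    rcases ht with ⟨k, l, hkl, rfl⟩ | rfl | rfl
    · have h1 : ((2,3) : Fin 4 × Fin 4) ≠ (k,l) := by
        simp only [ne_eq, Prod.mk.injEq, not_and]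
        intro h0 h1; exact hkl (Or.inl ⟨h0.symm, h1.symm⟩)
      simp only [e8_apply, if_neg h1, mul_zero, sub_zero]
      exact ite_mem_rng _
    · refine ⟨0, ?_⟩
      simp only [Pi.add_apply, Pi.smul_apply, e8_apply, smul_eq_mul, map_zero, Prod.mk.injEq]
      simp
      try ring
    · refine ⟨0, ?_⟩
      simp only [Pi.sub_apply, Pi.smul_apply, e8_apply, smul_eq_mul, map_zero, Prod.mk.injEq]
      simp
      try ring
  · rw [pair_add_smul]
    rcases ht with ⟨k, l, hkl, rfl⟩ | rfl | rfl
    · have h1 : ((3,2) : Fin 4 × Fin 4) ≠ (k,l) := by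
        simp only [ne_eq, Prod.mk.injEq, not_and]
        intro h0 h1; exact hkl (Or.inr ⟨h0.symm, h1.symm⟩)
      simp only [e8_apply, if_neg h1, mul_zero, add_zero]
      exact ite_mem_rng _
    · refine ⟨0, ?_⟩
      simp only [Pi.add_apply, Pi.smul_apply, e8_apply, smul_eq_mul, map_zero, Prod.mk.injEq]
      simp
      try ring
    · refine ⟨0, ?_⟩
      simp only [Pi.sub_apply, Pi.smul_apply, e8_apply, smul_eq_mul, map_zero, Prod.mk.injEq]
      simp
      try ring

end Main

section Back

lemma a2_smul (a : A2) (x : R2) : a • x = algebraMap A2 R2 a * x := Algebra.smul_def a x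

lemma r2_smul (c x : R2) : c • x = c * x := rfl

noncomputable def coefFn (a : Fin 4 × Fin 4 → A2) (b c : A2) : Fin 4 × Fin 4 → A2 := fun q =>
  if q = (0,1) then b else if q = (1,0) then c
  else if q = (2,3) then 0 else if q = (3,2) then 0 else a q

lemma backward : chiralAnn (Submodule.span A2 Pgen) ≤ Submodule.span A2 Qgen := by
  intro t ht
  rw [chiralAnn_span] at ht
  have hgen : ∀ q : Fin 4 × Fin 4, ∃ a : A2,
      q ≠ (0,1) → q ≠ (1,0) → algebraMap A2 R2 a = t q := by
    intro q
    by_cases h0 : q = (0,1)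
    · exact ⟨0, fun h _ => absurd h0 h⟩
    by_cases h1 : q = (1,0)
    · exact ⟨0, fun _ h => absurd h1 h⟩
    have hq : e8 q ∈ Pgen := by
      left
      refine ⟨q.1, q.2, ?_, by rw [Prod.mk.eta]⟩
      rintro (⟨ha, hb⟩ | ⟨ha, hb⟩)
      · exact h0 (Prod.ext ha hb)
      · exact h1 (Prod.ext ha hb)
    obtain ⟨a, ha⟩ := ht _ hq
    rw [pair_e8] at ha
    exact ⟨a, fun _ _ => ha⟩
  choose a ha using hgen
  obtain ⟨b, hb⟩ := ht _ (Or.inr (Or.inl rfl))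
  rw [pair_sub_smul, Algebra.linearMap_apply] at hb
  obtain ⟨c, hc⟩ := ht _ (Or.inr (Or.inr rfl))
  rw [pair_add_smul, Algebra.linearMap_apply] at hc
  have h23 : algebraMap A2 R2 (a (2,3)) = t (2,3) := ha _ (by decide) (by decide)
  have h32 : algebraMap A2 R2 (a (3,2)) = t (3,2) := ha _ (by decide) (by decide)
  have hsum : ∀ r, (∑ q : Fin 4 × Fin 4, coefFn a b c q • e8 q) r
      = algebraMap A2 R2 (coefFn a b c r) := by
    intro r
    rw [Finset.sum_apply]
    simp only [Pi.smul_apply, a2_smul, e8_apply, mul_ite, mul_one, mul_zero]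
    simp [Finset.sum_ite_eq]
  have key : t = (∑ q : Fin 4 × Fin 4, coefFn a b c q • e8 q)
      + a (2,3) • (e8 (2,3) + dltInv • e8 (0,1))
      + a (3,2) • (e8 (3,2) - dltInv • e8 (1,0)) := by
    funext r
    simp only [Pi.add_apply, Pi.sub_apply, Pi.smul_apply, hsum, e8_apply, a2_smul, r2_smul]
    by_cases h0 : r = (0,1)
    · subst h0
      simp only [coefFn]
      simp
      rw [hb, ← h23]
      ring
    by_cases h1 : r = (1,0)
    · subst h1
      simp only [coefFn]
      simp
      rw [hc, ← h32]
      ring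
    by_cases h2 : r = (2,3)
    · subst h2
      simp only [coefFn]
      simp
      rw [← h23]
    by_cases h3 : r = (3,2)
    · subst h3
      simp only [coefFn]
      simp
      rw [← h32]
    · simp only [coefFn, if_neg h0, if_neg h1, if_neg h2, if_neg h3]
      rw [ha r h0 h1]
      ring
  rw [key]
  refine add_mem (add_mem (Submodule.sum_mem _ ?_) ?_) ?_
  · intro q _
    by_cases h2 : q = (2,3)
    · subst h2
      have hz : coefFn a b c (2,3) = 0 := by simp [coefFn]
      have hz2 : (0 : A2) • e8 (2,3) = 0 := by
        funext r; show (0 : A2) • e8 (2,3) r = 0; rw [a2_smul]; simp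
      rw [hz, hz2]
      exact zero_mem _
    by_cases h3 : q = (3,2)
    · subst h3
      have hz : coefFn a b c (3,2) = 0 := by simp [coefFn]
      have hz2 : (0 : A2) • e8 (3,2) = 0 := by
        funext r; show (0 : A2) • e8 (3,2) r = 0; rw [a2_smul]; simp
      rw [hz, hz2]
      exact zero_mem _
    · refine Submodule.smul_mem _ _ (Submodule.subset_span ?_)
      left
      refine ⟨q.1, q.2, ?_, by rw [Prod.mk.eta]⟩
      rintro (⟨ha', hb'⟩ | ⟨ha', hb'⟩)
      · exact h2 (Prod.ext ha' hb')
      · exact h3 (Prod.ext ha' hb')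
  · exact Submodule.smul_mem _ _ (Submodule.subset_span (Or.inr (Or.inl rfl)))
  · exact Submodule.smul_mem _ _ (Submodule.subset_span (Or.inr (Or.inr rfl)))

end Back


/-- In the free module of rank 16 over `ℂ[z₁,z₂][(z₁−z₂)⁻¹]` with
basis `φ_i ⊠ φ_j`, the chiral annihilator of the `ℂ[z₁,z₂]`-submodule `P` spanned by
`Pgen` is exactly the `ℂ[z₁,z₂]`-span of `Qgen`. -/
theorem annihilator_of_quadratic_example :
    chiralAnn (Submodule.span A2 Pgen) = Submodule.span A2 Qgen :=
  le_antisymm backward forward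
end

section
/- Let g be a finite-dimensional Lie algebra with basis {x_a}, structure constants f_{ab}^c, and invariant symmetric form κ. In the vertex algebra tensor product V_κ(g) ⊗ V^{CE}(g), where V_κ(g) is the level-κ affine vertex algebra with generating fields J_a and V^{CE}(g) is the graded commutative vertex algebra generated by odd fields c^a, the canonical element I = Σ_a J_a ⊗ c^a satisfies I_{(0)} I = Σ_{a,b,c} f_{ab}^c J_c ⊗ c^a c^b + Σ_{a,b} |0⟩ ⊗ κ_{ab} (∂c^a) c^b. -/
open TensorProduct

/-- In the tensor product `V_κ(g) ⊗ V^CE(g)` of the level-`κ`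
affine vertex algebra (with currents `J_a`, modes `Jmode`, vacuum `vac`) and the free
graded commutative vertex algebra on odd generators `c^a` (with modes `cmode` and
translation `D = ∂`), the canonical element `I = Σ_a J_a ⊗ c^a` satisfies
`I_(0) I = Σ_{a,b,c} f_{ab}^c J_c ⊗ c^a c^b + Σ_{a,b} κ_{ab} |0⟩ ⊗ (∂c^a) c^b`,
where `I_(0) = Σ_a Σ_{l+m=-1} J_{a,(l)} ⊗ c^a_{(m)}`. -/
theorem canonical_element_zero_mode_square
    (V W : Type*) [AddCommGroup V] [Module ℂ V] [Ring W] [Algebra ℂ W]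
    (n : ℕ) (f : Fin n → Fin n → Fin n → ℂ) (κ : Fin n → Fin n → ℂ)
    (J : Fin n → V) (vac : V) (c : Fin n → W)
    (Jmode : Fin n → ℤ → Module.End ℂ V) (cmode : Fin n → ℤ → Module.End ℂ W)
    (D : Module.End ℂ W)
    -- products of the currents `J_a`
    (hJ0 : ∀ a b, Jmode a 0 (J b) = ∑ c', f a b c' • J c')
    (hJ1 : ∀ a b, Jmode a 1 (J b) = κ a b • vac)
    (hJ2 : ∀ a b (l : ℤ), 2 ≤ l → Jmode a l (J b) = 0)
    -- modes of the odd generators `c^a` on generators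
    (hc0 : ∀ a b (k : ℤ), 0 ≤ k → cmode a k (c b) = 0)
    (hcm1 : ∀ a b, cmode a (-1) (c b) = c a * c b)
    (hcm2 : ∀ a b, cmode a (-2) (c b) = D (c a) * c b) :
    (∑ᶠ l : ℤ, ∑ a, TensorProduct.map (Jmode a l) (cmode a (-1 - l))
        (∑ b, J b ⊗ₜ[ℂ] c b)) =
      (∑ a, ∑ b, ∑ c', f a b c' • (J c' ⊗ₜ[ℂ] (c a * c b))) +
        ∑ a, ∑ b, κ a b • (vac ⊗ₜ[ℂ] (D (c a) * c b)) := by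
  set g : ℤ → V ⊗[ℂ] W := fun l => ∑ a, TensorProduct.map (Jmode a l) (cmode a (-1 - l))
        (∑ b, J b ⊗ₜ[ℂ] c b) with hg
  have hterm : ∀ l, g l = ∑ a, ∑ b, (Jmode a l (J b)) ⊗ₜ[ℂ] (cmode a (-1 - l) (c b)) := by
    intro l
    refine Finset.sum_congr rfl fun a _ => ?_
    rw [map_sum]
    exact Finset.sum_congr rfl fun b _ => TensorProduct.map_tmul _ _ _ _
  have hsupp : ∀ l ∉ ({0, 1} : Finset ℤ), g l = 0 := by
    intro l hl
    simp only [Finset.mem_insert, Finset.mem_singleton] at hl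
    rw [hterm]
    refine Finset.sum_eq_zero fun a _ => Finset.sum_eq_zero fun b _ => ?_
    rcases le_or_gt 2 l with h | h
    · rw [hJ2 a b l h, TensorProduct.zero_tmul]
    · have hl' : l ≤ -1 := by omega
      rw [hc0 a b (-1 - l) (by omega), TensorProduct.tmul_zero]
  rw [finsum_eq_sum_of_support_subset g (s := ({0, 1} : Finset ℤ))
    (fun l hl => by by_contra h; exact hl (hsupp l h))]
  have h01 : (∑ l ∈ ({0, 1} : Finset ℤ), g l) = g 0 + g 1 := by
    rw [Finset.sum_insert (by decide), Finset.sum_singleton]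
  rw [h01, hterm, hterm]
  congr 1
  · refine Finset.sum_congr rfl fun a _ => Finset.sum_congr rfl fun b _ => ?_
    rw [hJ0, show (-1 - (0:ℤ)) = -1 by ring, hcm1, TensorProduct.sum_tmul]
    exact Finset.sum_congr rfl fun c' _ => by rw [TensorProduct.smul_tmul']
  · refine Finset.sum_congr rfl fun a _ => Finset.sum_congr rfl fun b _ => ?_
    rw [hJ1, show (-1 - (1:ℤ)) = -2 by ring, hcm2, TensorProduct.smul_tmul']
end

section
/- With notation as in the affine Kac–Moody example: define the differential d on V^{CE}(g) by d(∂^m c^a) = −(1/2) Σ_{b,c} Σ_{r+s=m} f^a_{bc} C(m,r) (∂^r c^b)(∂^s c^c) (extended as an odd derivation), and the curving ι = −Σ_{a,b} κ_{ab} (∂c^a) c^b. Then the canonical element I = Σ_a J_a ⊗ c^a in V_κ(g) ⊗ V^{CE}(g) satisfies the Maurer–Cartan equation d I + (1/2) I_{(0)} I + (1/2) ι = 0, where d acts on the second tensor factor and ι is regarded as |0⟩ ⊗ ι. -/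
open TensorProduct

/-- With the Chevalley–Eilenberg differential `d` (given on
generators by `d(c^a) = −(1/2)Σ_{b,c} f^a_{bc} c^b c^c`) acting on the second tensor
factor and the curving `ι = −Σ_{a,b} κ_{ab} (∂c^a) c^b`, the canonical element
`I = Σ_a J_a ⊗ c^a ∈ V_κ(g) ⊗ V^CE(g)` satisfies the Maurer–Cartan equation
`d I + (1/2) I_(0) I + (1/2) ι = 0` (with `ι` regarded as `|0⟩ ⊗ ι`).
Here `f a b c'` denotes `f_{ab}^{c'}`. -/
theorem canonical_element_maurer_cartan
    (V W : Type*) [AddCommGroup V] [Module ℂ V] [Ring W] [Algebra ℂ W]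
    (n : ℕ) (f : Fin n → Fin n → Fin n → ℂ) (κ : Fin n → Fin n → ℂ)
    (J : Fin n → V) (vac : V) (c : Fin n → W)
    (Jmode : Fin n → ℤ → Module.End ℂ V) (cmode : Fin n → ℤ → Module.End ℂ W)
    (D : Module.End ℂ W) (d : Module.End ℂ W)
    -- products of the currents `J_a`
    (hJ0 : ∀ a b, Jmode a 0 (J b) = ∑ c', f a b c' • J c')
    (hJ1 : ∀ a b, Jmode a 1 (J b) = κ a b • vac)
    (hJ2 : ∀ a b (l : ℤ), 2 ≤ l → Jmode a l (J b) = 0)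
    -- modes of the odd generators `c^a` on generators
    (hc0 : ∀ a b (k : ℤ), 0 ≤ k → cmode a k (c b) = 0)
    (hcm1 : ∀ a b, cmode a (-1) (c b) = c a * c b)
    (hcm2 : ∀ a b, cmode a (-2) (c b) = D (c a) * c b)
    -- the CE differential on generators: `d(c^a) = −(1/2)Σ f^a_{bc} c^b c^c`
    (hd : ∀ a, d (c a) = -(2 : ℂ)⁻¹ • ∑ b, ∑ c', f b c' a • (c b * c c')) :
    (LinearMap.lTensor V d) (∑ b, J b ⊗ₜ[ℂ] c b) +
      (2 : ℂ)⁻¹ • (∑ᶠ l : ℤ, ∑ a, TensorProduct.map (Jmode a l) (cmode a (-1 - l))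
        (∑ b, J b ⊗ₜ[ℂ] c b)) +
      (2 : ℂ)⁻¹ • (vac ⊗ₜ[ℂ] (-(∑ a, ∑ b, κ a b • (D (c a) * c b)))) = 0 := by
  classical
  set X : V ⊗[ℂ] W := ∑ a, ∑ b, ∑ c', f a b c' • (J c' ⊗ₜ[ℂ] (c a * c b)) with hX
  set Y : V ⊗[ℂ] W := ∑ a, ∑ b, κ a b • (vac ⊗ₜ[ℂ] (D (c a) * c b)) with hY
  -- the differential term
  have h1 : (LinearMap.lTensor V d) (∑ b, J b ⊗ₜ[ℂ] c b) = -((2 : ℂ)⁻¹ • X) := by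
    rw [map_sum]
    have : ∀ b, (LinearMap.lTensor V d) (J b ⊗ₜ[ℂ] c b)
        = -((2 : ℂ)⁻¹ • ∑ a, ∑ c', f a c' b • (J b ⊗ₜ[ℂ] (c a * c c'))) := by
      intro b
      rw [LinearMap.lTensor_tmul, hd b]
      rw [neg_smul, tmul_neg, tmul_smul, tmul_sum]
      congr 2
      refine Finset.sum_congr rfl fun a _ => ?_
      rw [tmul_sum]
      exact Finset.sum_congr rfl fun c' _ => tmul_smul _ _ _
    rw [Finset.sum_congr rfl fun b _ => this b, Finset.sum_neg_distrib,
      ← Finset.smul_sum]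
    congr 2
    rw [hX]
    calc ∑ b, ∑ a, ∑ c', f a c' b • (J b ⊗ₜ[ℂ] (c a * c c'))
        = ∑ a, ∑ b, ∑ c', f a c' b • (J b ⊗ₜ[ℂ] (c a * c c')) := Finset.sum_comm
      _ = ∑ a, ∑ b, ∑ c', f a b c' • (J c' ⊗ₜ[ℂ] (c a * c b)) :=
          Finset.sum_congr rfl fun a _ => Finset.sum_comm
  -- the finsum term
  have h2 : (∑ᶠ l : ℤ, ∑ a, TensorProduct.map (Jmode a l) (cmode a (-1 - l))
      (∑ b, J b ⊗ₜ[ℂ] c b)) = X + Y := by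
    set F : ℤ → V ⊗[ℂ] W := fun l => ∑ a, TensorProduct.map (Jmode a l) (cmode a (-1 - l))
      (∑ b, J b ⊗ₜ[ℂ] c b) with hF
    have hFl : ∀ l : ℤ, l ≠ 0 → l ≠ 1 → F l = 0 := by
      intro l h0 h1'
      rw [hF]
      refine Finset.sum_eq_zero fun a _ => ?_
      rw [map_sum]
      refine Finset.sum_eq_zero fun b _ => ?_
      rw [TensorProduct.map_tmul]
      rcases le_or_gt 2 l with hl | hl
      · rw [hJ2 a b l hl, zero_tmul]
      · have : (0 : ℤ) ≤ -1 - l := by omega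
        rw [hc0 a b _ this, tmul_zero]
    have hsupp : Function.support F ⊆ (({0, 1} : Finset ℤ) : Set ℤ) := by
      intro l hl
      simp only [Finset.coe_insert, Finset.coe_singleton, Set.mem_insert_iff,
        Set.mem_singleton_iff]
      by_contra h
      push_neg at h
      exact hl (hFl l h.1 h.2)
    rw [finsum_eq_finset_sum_of_support_subset F hsupp]
    have h01 : (∑ l ∈ ({0, 1} : Finset ℤ), F l) = F 0 + F 1 := by
      rw [Finset.sum_pair (by norm_num)]
    rw [h01]
    have hF0 : F 0 = X := by
      rw [hF, hX]
      refine Finset.sum_congr rfl fun a _ => ?_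
      rw [map_sum]
      refine Finset.sum_congr rfl fun b _ => ?_
      rw [TensorProduct.map_tmul, hJ0 a b]
      have : (-1 - (0 : ℤ)) = -1 := by norm_num
      rw [this, hcm1 a b, sum_tmul]
      exact Finset.sum_congr rfl fun c' _ => smul_tmul' _ _ _
    have hF1 : F 1 = Y := by
      rw [hF, hY]
      refine Finset.sum_congr rfl fun a _ => ?_
      rw [map_sum]
      refine Finset.sum_congr rfl fun b _ => ?_
      rw [TensorProduct.map_tmul, hJ1 a b]
      have : (-1 - (1 : ℤ)) = -2 := by norm_num
      rw [this, hcm2 a b]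
      exact smul_tmul' _ _ _
    rw [hF0, hF1]
  -- the curving term
  have h3 : (vac ⊗ₜ[ℂ] (-(∑ a, ∑ b, κ a b • (D (c a) * c b)))) = -Y := by
    rw [tmul_neg, hY]
    congr 1
    rw [tmul_sum]
    refine Finset.sum_congr rfl fun a _ => ?_
    rw [tmul_sum]
    exact Finset.sum_congr rfl fun b _ => tmul_smul _ _ _
  rw [h1, h2, h3, smul_add, smul_neg]
  abel
end
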